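/- Solution of the space recurrence: Let c > 0 and B ≥ 8 be reals, and let f : ℝ → ℝ be a function satisfying f(x) ≤ c·x for all x with 2 ≤ x < B, and f(x) ≤ 3·x^{1/3}·f(x^{2/3}) + c·x for all x ≥ B. Then f(x) ≤ 3c·x·(log₂ x)³ for all x ≥ 2. -/
import Mathlib


/-- **Solution of the space recurrence.**  Let `c > 0` and `B ≥ 8` be reals, and let
`f : ℝ → ℝ` satisfy `f x ≤ c·x` for `2 ≤ x < B` and
`f x ≤ 3·x^{1/3}·f (x^{2/3}) + c·x` for `x ≥ B`.  Then `f x ≤ 3c·x·(log₂ x)³` for all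
`x ≥ 2`. -/
theorem space_recurrence_solution (c B : ℝ) (hc : 0 < c) (hB : 8 ≤ B)
    (f : ℝ → ℝ)
    (hbase : ∀ x : ℝ, 2 ≤ x → x < B → f x ≤ c * x)
    (hrec : ∀ x : ℝ, B ≤ x →
      f x ≤ 3 * x ^ ((1 : ℝ) / 3) * f (x ^ ((2 : ℝ) / 3)) + c * x) :
    ∀ x : ℝ, 2 ≤ x → f x ≤ 3 * c * x * (Real.logb 2 x) ^ 3 := by
  have key : ∀ n : ℕ, ∀ x : ℝ, 2 ≤ x → x ≤ n → f x ≤ 3 * c * x * (Real.logb 2 x) ^ 3 := by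
    intro n
    induction n using Nat.strong_induction_on with
    | _ n ih =>
      intro x hx2 hxn
      have hx0 : 0 < x := by linarith
      have hL1 : 1 ≤ Real.logb 2 x := by
        rw [Real.le_logb_iff_rpow_le (by norm_num) hx0]
        simpa using hx2
      have hL3cube : 1 ≤ (Real.logb 2 x) ^ 3 := by
        nlinarith [mul_nonneg (sub_nonneg.mpr hL1) (sq_nonneg (Real.logb 2 x)),
          mul_nonneg (sub_nonneg.mpr hL1) (sub_nonneg.mpr hL1)]
      by_cases hxB : x < B
      · have h := hbase x hx2 hxB
        nlinarith [mul_nonneg (mul_nonneg hc.le hx0.le) (sub_nonneg.mpr hL3cube)]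
      · push_neg at hxB
        have hx8 : (8 : ℝ) ≤ x := le_trans hB hxB
        set u := x ^ ((1:ℝ)/3) with hu
        set v := x ^ ((2:ℝ)/3) with hv
        have hu2 : (2 : ℝ) ≤ u := by
          have : ((8:ℝ)) ^ ((1:ℝ)/3) ≤ x ^ ((1:ℝ)/3) :=
            Real.rpow_le_rpow (by norm_num) hx8 (by norm_num)
          have h8 : ((8:ℝ)) ^ ((1:ℝ)/3) = 2 := by
            rw [show (8:ℝ) = 2 ^ (3:ℝ) by
              rw [show (3:ℝ) = ((3:ℕ):ℝ) by norm_num, Real.rpow_natCast]; norm_num,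
              ← Real.rpow_mul (by norm_num)]
            norm_num
          linarith [h8 ▸ this]
        have hv2 : (2 : ℝ) ≤ v := by
          have : x ^ ((1:ℝ)/3) ≤ x ^ ((2:ℝ)/3) :=
            Real.rpow_le_rpow_of_exponent_le (by linarith) (by norm_num)
          linarith
        have hmul : u * v = x := by
          rw [hu, hv, ← Real.rpow_add hx0]
          norm_num
        have hv0 : 0 < v := by linarith
        have hvx : v ≤ x / 2 := by nlinarith
        have hn8 : (8 : ℕ) ≤ n := by exact_mod_cast le_trans hx8 hxn
        have hvn : v ≤ ((n - 1 : ℕ) : ℝ) := by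
          have : ((n - 1 : ℕ) : ℝ) = (n : ℝ) - 1 := by
            rw [Nat.cast_sub (by omega)]; norm_num
          rw [this]
          linarith
        have hIH := ih (n - 1) (by omega) v hv2 hvn
        have hlogv : Real.logb 2 v = (2/3) * Real.logb 2 x := by
          rw [hv, Real.logb, Real.log_rpow hx0, Real.logb]
          ring
        rw [hlogv] at hIH
        have hrec' := hrec x hxB
        rw [← hu, ← hv] at hrec'
        have hL3 : 3 ≤ Real.logb 2 x := by
          rw [Real.le_logb_iff_rpow_le (by norm_num) hx0]
          rw [show (3:ℝ) = ((3:ℕ):ℝ) by norm_num, Real.rpow_natCast]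
          norm_num
          linarith
        set L := Real.logb 2 x with hL
        have hu0 : (0:ℝ) < u := by linarith
        -- f x ≤ 3u * f v + c x ≤ 3u * (3 c v ((2/3)L)^3) + c x = (8/3) c x L^3 + c x
        have step : 3 * u * f v ≤ 3 * u * (3 * c * v * ((2/3) * L) ^ 3) := by
          apply mul_le_mul_of_nonneg_left hIH (by linarith)
        have hLcube : 27 ≤ L ^ 3 := by
          have := pow_le_pow_left₀ (by norm_num : (0:ℝ) ≤ 3) hL3 3
          norm_num at this; linarith
        have : 3 * u * (3 * c * v * ((2/3) * L) ^ 3) = (8/3) * c * (u * v) * L ^ 3 := by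
          ring
        rw [this, hmul] at step
        nlinarith [mul_nonneg (mul_nonneg hc.le hx0.le) (by linarith : (0:ℝ) ≤ L ^ 3 - 3)]
  intro x hx2
  exact key ⌈x⌉₊ x hx2 (Nat.le_ceil x)
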